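/- arXiv:1309.5379 — 2 statements merged into one kernel-verified Lean document; each statement's English description precedes it below -/
import Mathlib

section
/- In the setup with longest cycle C, vertex u off C, vertex v on C with v⁺,v⁻ ∈ N(u), and B = N(u) ∪ N(v) = {b₁ = v⁺, …, b_m = v⁻} in cyclic order, there is no path P in G consisting of all vertices of the arc from v⁺ to b_i⁻ along C (for some 1 < i < m) whose endpoints are v⁺ and some b_j with j < i. (I.e., G contains no 'bad path' of form (i).) -/
open scoped Classical

namespace Paper

noncomputable section

variable {V : Type*}

/-- degree as cardinality of neighbor set -/
def deg (G : SimpleGraph V) (x : V) : ℕ := (G.neighborSet x).ncard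

/-- G is 1-tough -/
def OneTough (G : SimpleGraph V) : Prop :=
  ∀ S : Set V, S.Nonempty → Nat.card ((G.induce Sᶜ).ConnectedComponent) ≤ S.ncard

def IsIndepTriple (G : SimpleGraph V) (s : Finset V) : Prop :=
  s.card = 3 ∧ ∀ x ∈ s, ∀ y ∈ s, x ≠ y → ¬ G.Adj x y

def sigma3 [Fintype V] (G : SimpleGraph V) : ℕ :=
  if ∃ s : Finset V, IsIndepTriple G s then
    sInf {k | ∃ s : Finset V, IsIndepTriple G s ∧ ∑ x ∈ s, deg G x = k}
  else 3 * (Fintype.card V - 1)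

def NC2 [Fintype V] (G : SimpleGraph V) : ℕ :=
  if G = ⊤ then Fintype.card V - 1
  else sInf {k | ∃ x y : V, G.dist x y = 2 ∧ (G.neighborSet x ∪ G.neighborSet y).ncard = k}

def circumference (G : SimpleGraph V) : ℕ :=
  sSup {k | ∃ (a : V) (w : G.Walk a a), w.IsCycle ∧ w.length = k}

def IsLongestCycle (G : SimpleGraph V) {a : V} (c : G.Walk a a) : Prop :=
  c.IsCycle ∧ ∀ (b : V) (w : G.Walk b b), w.IsCycle → w.length ≤ c.length

/-- successor of a vertex along the oriented cycle `c` (identity off the cycle) -/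
def cSucc [DecidableEq V] {G : SimpleGraph V} {a : V} (c : G.Walk a a) (x : V) : V :=
  if h : x ∈ c.support.tail then c.support.tail.next x h else x

/-- predecessor of a vertex along the oriented cycle `c` (identity off the cycle) -/
def cPred [DecidableEq V] {G : SimpleGraph V} {a : V} (c : G.Walk a a) (x : V) : V :=
  if h : x ∈ c.support.tail then c.support.tail.prev x h else x

/-- vertices strictly between `x` and `y` going forward along `c` -/
def arc [DecidableEq V] {G : SimpleGraph V} {a : V} (c : G.Walk a a) (x y : V) : Set V :=
  {z | ∃ i k : ℕ, 0 < i ∧ i < k ∧ k < c.length ∧ (cSucc c)^[k] x = y ∧ z = (cSucc c)^[i] x}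

/-- length of the interval of the cycle `c` starting at `b` determined by `B` -/
def intervalLen [DecidableEq V] {G : SimpleGraph V} {a : V} (c : G.Walk a a)
    (B : Set V) (b : V) : ℕ :=
  sInf {k | 0 < k ∧ (cSucc c)^[k] b ∈ B}

/-- inner vertices of the interval of the cycle `c` starting at `b` determined by `B` -/
def innerVerts [DecidableEq V] {G : SimpleGraph V} {a : V} (c : G.Walk a a)
    (B : Set V) (b : V) : Set V :=
  {x | ∃ i, 0 < i ∧ i < intervalLen c B b ∧ x = (cSucc c)^[i] b}

/-- the union of the neighborhoods of the vertices in `S` -/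
def nbhdSet (G : SimpleGraph V) (S : Set V) : Set V := {z | ∃ y ∈ S, G.Adj y z}

/-- a set of vertices is independent -/
def IsIndepSet (G : SimpleGraph V) (S : Set V) : Prop :=
  ∀ x ∈ S, ∀ y ∈ S, ¬ G.Adj x y

/-!
Write `g i` for the `i`-th successor of `v` on `C`, so that `g 0 = v`, `g 1 = v⁺`,
`g (n - 1) = v⁻` for `n = |C|`, and let `b = g k` and `b' = g t` with `0 < t < k < n`.
Both `u` and `v` are adjacent to `v⁺` and to `v⁻`, so they play symmetric roles: let `x` be the
one adjacent to `b` and `x'` the other. Then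
`x, g k, g (k + 1), …, g (n - 1), x'`, followed by the bad path `P` (run from `v⁺` to `b'` if
`b' ∼ x`, and backwards if `b' ∼ x'`) and back to `x`, is a closed walk of length `n + 1`
through the `n + 1` distinct vertices `u, v, g 1, …, g (n - 1)`: a cycle longer than `C`.
-/

open SimpleGraph

section WalkOfAdjSeq

variable {G : SimpleGraph V} (g : ℕ → V) (hg : ∀ i, G.Adj (g i) (g (i + 1)))

def walkOfAdjSeq : (n : ℕ) → G.Walk (g 0) (g n)
  | 0 => Walk.nil
  | n + 1 => (walkOfAdjSeq n).concat (hg n)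

@[simp]
lemma length_walkOfAdjSeq (n : ℕ) : (walkOfAdjSeq g hg n).length = n := by
  induction n with
  | zero => rfl
  | succ n ih => simp [walkOfAdjSeq, ih]

lemma mem_support_walkOfAdjSeq {i n : ℕ} (hi : i ≤ n) :
    g i ∈ (walkOfAdjSeq g hg n).support := by
  induction n with
  | zero => simp [walkOfAdjSeq, Nat.le_zero.mp hi]
  | succ n ih =>
    rcases hi.lt_or_eq with hi | rfl
    · simp [walkOfAdjSeq, ih (Nat.lt_succ_iff.mp hi)]
    · simp [walkOfAdjSeq]

end WalkOfAdjSeq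

section CycleSupport

variable {G : SimpleGraph V} {a : V} {c : G.Walk a a}

lemma exists_getElem_support_tail (hc : ¬ c.Nil) {x : V} (hx : x ∈ c.support) :
    ∃ (j : ℕ) (hj : j < c.support.tail.length), c.support.tail[j] = x := by
  refine List.getElem_of_mem ?_
  rcases c.mem_support_iff.mp hx with rfl | hx
  · exact Walk.end_mem_tail_support hc
  · exact hx

lemma adj_getElem_support_tail (i : ℕ) (hi : i < c.support.tail.length) :
    G.Adj c.support.tail[i] (c.support.tail[(i + 1) % c.support.tail.length]'
      (Nat.mod_lt _ (by omega))) := by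
  simp only [List.length_tail, Walk.length_support, Nat.add_sub_cancel] at hi ⊢
  simp only [List.getElem_tail, Walk.support_getElem_eq_getVert]
  obtain h | h : i + 1 < c.length ∨ i + 1 = c.length := by omega
  · rw [Nat.mod_eq_of_lt h]
    exact c.adj_getVert_succ h
  · rw [h, Nat.mod_self, Walk.getVert_length]
    simpa using c.adj_getVert_succ (by omega : 0 < c.length)

end CycleSupport

section CycleSucc

variable [DecidableEq V] {G : SimpleGraph V} {a : V} {c : G.Walk a a}

lemma cSucc_getElem (hc : c.IsCycle) (i : ℕ) (hi : i < c.support.tail.length) :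
    cSucc c c.support.tail[i] = c.support.tail[(i + 1) % c.support.tail.length]'
      (Nat.mod_lt _ (by omega)) := by
  rw [cSucc, dif_pos (List.getElem_mem hi)]
  exact List.next_getElem _ hc.support_nodup i hi

lemma iterate_cSucc_getElem (hc : c.IsCycle) (i j : ℕ) (hj : j < c.support.tail.length) :
    (cSucc c)^[i] c.support.tail[j] = c.support.tail[(j + i) % c.support.tail.length]'
      (Nat.mod_lt _ (by omega)) := by
  induction i with
  | zero => simp only [Function.iterate_zero, id, Nat.add_zero, Nat.mod_eq_of_lt hj]
  | succ i ih =>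
    rw [Function.iterate_succ_apply', ih, cSucc_getElem hc]
    simp only [Nat.mod_add_mod, Nat.add_assoc]

variable (hc : c.IsCycle) {v : V} (hv : v ∈ c.support)
include hc

lemma adj_cSucc {x : V} (hx : x ∈ c.support) : G.Adj x (cSucc c x) := by
  obtain ⟨j, hj, rfl⟩ := exists_getElem_support_tail hc.not_nil hx
  rw [cSucc_getElem hc]
  exact adj_getElem_support_tail j hj

include hv

lemma iterate_cSucc_mem_support (i : ℕ) : (cSucc c)^[i] v ∈ c.support := by
  obtain ⟨j, hj, rfl⟩ := exists_getElem_support_tail hc.not_nil hv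
  rw [iterate_cSucc_getElem hc]
  exact List.mem_of_mem_tail (List.getElem_mem _)

lemma adj_iterate_cSucc (i : ℕ) : G.Adj ((cSucc c)^[i] v) ((cSucc c)^[i + 1] v) := by
  rw [Function.iterate_succ_apply']
  exact adj_cSucc hc (iterate_cSucc_mem_support hc hv i)

lemma iterate_cSucc_length : (cSucc c)^[c.length] v = v := by
  obtain ⟨j, hj, rfl⟩ := exists_getElem_support_tail hc.not_nil hv
  have hlen : c.support.tail.length = c.length := by simp
  rw [iterate_cSucc_getElem hc]
  simp only [hlen, Nat.add_mod_right, Nat.mod_eq_of_lt (hlen ▸ hj)]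

lemma injOn_iterate_cSucc : Set.InjOn (fun i => (cSucc c)^[i] v) (Set.Iio c.length) := by
  intro i hi i' hi' h
  obtain ⟨j, hj, rfl⟩ := exists_getElem_support_tail hc.not_nil hv
  have hlen : c.support.tail.length = c.length := by simp
  simp only [iterate_cSucc_getElem hc] at h
  have hmod := hc.support_nodup.getElem_inj_iff.mp h
  rw [hlen] at hmod
  exact Nat.ModEq.eq_of_lt_of_lt (Nat.ModEq.add_left_cancel' j hmod) hi hi'

lemma cPred_eq_iterate_cSucc : cPred c v = (cSucc c)^[c.length - 1] v := by
  obtain ⟨j, hj, rfl⟩ := exists_getElem_support_tail hc.not_nil hv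
  have hlen : c.support.tail.length = c.length := by simp
  rw [cPred, dif_pos (List.getElem_mem hj), List.prev_getElem _ hc.support_nodup,
    iterate_cSucc_getElem hc]
  simp only [hlen]

lemma arc_iterate_cSucc {k : ℕ} (hk : k < c.length) :
    arc c v ((cSucc c)^[k] v) = (fun i => (cSucc c)^[i] v) '' Set.Ioo 0 k := by
  ext z
  constructor
  · rintro ⟨i, k', hi, hik', hk', hkk', rfl⟩
    obtain rfl : k' = k := injOn_iterate_cSucc hc hv hk' hk hkk'
    exact ⟨i, ⟨hi, hik'⟩, rfl⟩
  · rintro ⟨i, ⟨hi, hik⟩, rfl⟩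
    exact ⟨i, k, hi, hik, hk, rfl, rfl⟩

lemma adj_cPred : G.Adj (cPred c v) v := by
  have h := adj_iterate_cSucc hc hv (c.length - 1)
  rwa [Nat.sub_add_cancel (by have := hc.three_le_length; omega), iterate_cSucc_length hc hv,
    ← cPred_eq_iterate_cSucc hc hv] at h

lemma card_insert_insert_image_iterate_cSucc {u : V} (hu : u ∉ c.support) :
    (insert u (insert v ((Finset.Ico 1 c.length).image fun i => (cSucc c)^[i] v))).card =
      c.length + 1 := by
  have hinj := injOn_iterate_cSucc hc hv
  have hv0 : v ∉ (Finset.Ico 1 c.length).image fun i => (cSucc c)^[i] v := by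
    simp only [Finset.mem_image, Finset.mem_Ico, not_exists, not_and]
    intro i hi hiv
    have := hinj (x₂ := 0) (Set.mem_Iio.mpr hi.2) (by simp; omega) hiv
    omega
  have hu0 : u ∉ insert v ((Finset.Ico 1 c.length).image fun i => (cSucc c)^[i] v) := by
    simp only [Finset.mem_insert, Finset.mem_image, not_or, not_exists, not_and]
    exact ⟨fun h => hu (h ▸ hv), fun i _ h => hu (h ▸ iterate_cSucc_mem_support hc hv i)⟩
  rw [Finset.card_insert_of_notMem hu0, Finset.card_insert_of_notMem hv0,
    Finset.card_image_of_injOn (hinj.mono fun i hi => by simp at hi ⊢; omega), Nat.card_Ico]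
  have := hc.three_le_length
  omega

lemma length_add_two_eq_of_support_eq_arc {k : ℕ} (hk : k < c.length) {x y : V}
    {P : G.Walk x y} (hP : P.IsPath) (hPsupp : {z | z ∈ P.support} = arc c v ((cSucc c)^[k] v)) :
    P.length + 2 = k := by
  have hset : P.support.toFinset = (Finset.Ioo 0 k).image fun i => (cSucc c)^[i] v := by
    rw [← Finset.coe_inj, Finset.coe_image, Finset.coe_Ioo, ← arc_iterate_cSucc hc hv hk,
      ← hPsupp]
    ext
    simp
  have hcard := List.toFinset_card_of_nodup hP.support_nodup
  rw [hset, Finset.card_image_of_injOn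
      ((injOn_iterate_cSucc hc hv).mono fun i hi => by simp at hi ⊢; omega),
    Nat.card_Ioo, Walk.length_support] at hcard
  omega

end CycleSucc

section LongestCycle

variable [DecidableEq V] {G : SimpleGraph V} {a : V} {c : G.Walk a a}

lemma IsLongestCycle.card_le_length_of_subset_support (hc : IsLongestCycle G c) {y : V}
    (W : G.Walk y y) {s : Finset V} (hs : ∀ x ∈ s, x ∈ W.support) (h3 : 3 ≤ W.length)
    (hW : W.length ≤ s.card) : s.card ≤ c.length := by
  have hnil : ¬ W.Nil := by rw [Walk.not_nil_iff_lt_length]; omega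
  have hsub : s ⊆ W.support.tail.toFinset := by
    intro x hx
    rw [List.mem_toFinset]
    rcases W.mem_support_iff.mp (hs x hx) with rfl | h
    · exact Walk.end_mem_tail_support hnil
    · exact h
  have hcard : s.card ≤ W.support.tail.toFinset.card := Finset.card_le_card hsub
  have hle : W.support.tail.toFinset.card ≤ W.support.tail.length := List.toFinset_card_le _
  have htail : W.support.tail.length = W.length := by simp
  have hcyc : W.IsCycle := by
    refine Walk.isCycle_iff_isPath_tail_and_le_length.mpr ⟨?_, h3⟩
    rw [Walk.isPath_def, Walk.support_tail_of_not_nil _ hnil]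
    exact Multiset.coe_nodup.mp (Multiset.toFinset_card_eq_card_iff_nodup.mp
      (show W.support.tail.toFinset.card = W.support.tail.length by omega))
  have := hc.2 y W hcyc
  omega

variable (hc : IsLongestCycle G c) (g : ℕ → V) (hg : ∀ i, G.Adj (g i) (g (i + 1)))
include hc hg

lemma IsLongestCycle.false_of_walk_covering_initial_arc {x x' : V}
    (hcard : (insert x (insert x' ((Finset.Ico 1 c.length).image g))).card = c.length + 1)
    {k : ℕ} (hk : k < c.length) (hxk : G.Adj x (g k)) (hx' : G.Adj x' (g (c.length - 1)))
    {y z : V} (Q : G.Walk y z) (hQlen : Q.length + 2 = k)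
    (hQ : ∀ i ∈ Finset.Ico 1 k, g i ∈ Q.support) (hy : G.Adj x' y) (hz : G.Adj z x) :
    False := by
  set n := c.length
  let S : G.Walk (g k) (g (n - 1)) :=
    (walkOfAdjSeq (fun i => g (k + i)) (fun i => hg (k + i)) (n - 1 - k)).copy rfl
      (by congr 1; omega)
  let W : G.Walk x x :=
    Walk.cons hxk (S.append (Walk.cons hx'.symm (Walk.cons hy (Q.concat hz))))
  have hlen : W.length = n + 1 := by simp [W, S]; omega
  have hcov : ∀ w ∈ insert x (insert x' ((Finset.Ico 1 n).image g)), w ∈ W.support := by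
    intro w hw
    simp only [Finset.mem_insert, Finset.mem_image, Finset.mem_Ico] at hw
    rcases hw with rfl | rfl | ⟨i, ⟨hi1, hin⟩, rfl⟩
    · exact W.start_mem_support
    · simp [W]
    · by_cases hik : i < k
      · simp [W, hQ i (Finset.mem_Ico.mpr ⟨hi1, hik⟩)]
      · have := mem_support_walkOfAdjSeq (fun j => g (k + j)) (fun j => hg (k + j))
          (show i - k ≤ n - 1 - k by omega)
        simp only [Nat.add_sub_cancel' (not_lt.mp hik)] at this
        simp [W, S, this]
  have := hc.card_le_length_of_subset_support W hcov (by omega) (by omega)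
  omega

lemma IsLongestCycle.false_of_path_covering_initial_arc {x x' : V}
    (hcard : (insert x (insert x' ((Finset.Ico 1 c.length).image g))).card = c.length + 1)
    {k t : ℕ} (hk : k < c.length) (hxk : G.Adj x (g k)) (hx1 : G.Adj x (g 1))
    (hx'1 : G.Adj x' (g 1)) (hx' : G.Adj x' (g (c.length - 1)))
    (ht : G.Adj x (g t) ∨ G.Adj x' (g t)) (P : G.Walk (g 1) (g t)) (hPlen : P.length + 2 = k)
    (hP : ∀ i ∈ Finset.Ico 1 k, g i ∈ P.support) : False := by
  rcases ht with ht | ht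
  · exact hc.false_of_walk_covering_initial_arc g hg hcard hk hxk hx' P hPlen hP hx'1 ht.symm
  · exact hc.false_of_walk_covering_initial_arc g hg hcard hk hxk hx' P.reverse
      (by simpa using hPlen) (by simpa using hP) ht hx1.symm

end LongestCycle

theorem stmt8_general {V : Type*} [DecidableEq V] (G : SimpleGraph V)
    {a : V} (c : G.Walk a a) (hc : IsLongestCycle G c)
    (u v : V) (hu : u ∉ c.support) (hv : v ∈ c.support)
    (huv1 : G.Adj u (cSucc c v)) (huv2 : G.Adj u (cPred c v))
    (B : Set V) (hB : B = G.neighborSet u ∪ G.neighborSet v) :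
    ¬ ∃ b ∈ B, b ≠ cSucc c v ∧ b ≠ cPred c v ∧
      ∃ b' ∈ B, b' ∈ arc c v b ∧
        ∃ p : G.Walk (cSucc c v) b', p.IsPath ∧ {x | x ∈ p.support} = arc c v b := by
  rintro ⟨b, hbB, -, -, b', hb'B, ⟨t, k, -, -, hkn, rfl, rfl⟩, P, hP, hPsupp⟩
  set g : ℕ → V := fun i => (cSucc c)^[i] v
  have hg : ∀ i, G.Adj (g i) (g (i + 1)) := adj_iterate_cSucc hc.1 hv
  have hcard := card_insert_insert_image_iterate_cSucc hc.1 hv hu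
  have hPlen := length_add_two_eq_of_support_eq_arc hc.1 hv hkn hP hPsupp
  have hPcov : ∀ i ∈ Finset.Ico 1 k, g i ∈ P.support := fun i hi => by
    have : g i ∈ arc c v (g k) := by
      rw [arc_iterate_cSucc hc.1 hv hkn]
      exact ⟨i, by simp at hi ⊢; omega, rfl⟩
    rwa [← hPsupp] at this
  have hvn : G.Adj v (g (c.length - 1)) := by
    simpa only [cPred_eq_iterate_cSucc hc.1 hv] using (adj_cPred hc.1 hv).symm
  rw [cPred_eq_iterate_cSucc hc.1 hv] at huv2
  rw [hB] at hbB hb'B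
  rcases hbB with hub | hvb
  · exact hc.false_of_path_covering_initial_arc g hg hcard hkn hub huv1 (hg 0) hvn hb'B P hPlen
      hPcov
  · exact hc.false_of_path_covering_initial_arc g hg (Finset.insert_comm u v _ ▸ hcard) hkn hvb
      (hg 0) huv1 huv2 hb'B.symm P hPlen hPcov

theorem stmt8 {V : Type*} [Fintype V] [DecidableEq V] (G : SimpleGraph V)
    (hn : 3 ≤ Fintype.card V) (htough : OneTough G) (hsig : Fintype.card V ≤ sigma3 G)
    (hham : ¬ G.IsHamiltonian) {a : V} (c : G.Walk a a) (hc : IsLongestCycle G c)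
    (u v : V) (hu : u ∉ c.support) (hv : v ∈ c.support)
    (huv1 : G.Adj u (cSucc c v)) (huv2 : G.Adj u (cPred c v))
    (B : Set V) (hB : B = G.neighborSet u ∪ G.neighborSet v) :
    ¬ ∃ b ∈ B, b ≠ cSucc c v ∧ b ≠ cPred c v ∧
      ∃ b' ∈ B, b' ∈ arc c v b ∧
        ∃ p : G.Walk (cSucc c v) b', p.IsPath ∧ {x | x ∈ p.support} = arc c v b :=
  stmt8_general G c hc u v hu hv huv1 huv2 B hB

end
end Paper
end

section
/- In the standard setup, suppose a = b_i⁺ and c = b_j⁻ are distinct with i < j and ac ∈ E(G). If some vertex x ∈ N(u) ∩ N(v) lies on the arc of C strictly between a and c (from a⁺ to c⁻), then none of x⁺v⁺, x⁺v⁻, x⁻v⁺, x⁻v⁻ is an edge of G. -/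
open scoped Classical

namespace Paper

noncomputable section

variable {V : Type*}

/-!
Index the longest cycle `C` by `g : ℕ → V` with `g 0 = v`, so that `v⁺ = g 1` and
`v⁻ = g (L - 1)`. If some `x^± v^±` were an edge then, whichever of `N(u)`, `N(v)` contain `bᵢ`
and `bⱼ`, this edge, the chord `a c`, the edges from `u` and `v` to `bᵢ`, `bⱼ`, `x` and the edges
`u v⁺`, `u v⁻` would let one reroute `C` through `u` along a few arcs of `C` that together cover
each vertex of `C` exactly once: a cycle longer than `C`. When `bⱼ = bᵢ⁺` such a rerouting exists
even without `x`.
-/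

open SimpleGraph

section Chains

variable {G : SimpleGraph V}

theorem exists_walk_support_eq_of_isChain {u : V} :
    ∀ {b : V} {l : List V}, (b :: l ++ [u]).IsChain G.Adj →
      ∃ p : G.Walk b u, p.support = b :: l ++ [u]
  | b, [], h => ⟨.cons (List.isChain_pair.1 h) .nil, rfl⟩
  | b, c :: l, h => by
    rw [List.cons_append, List.cons_append, List.isChain_cons_cons] at h
    obtain ⟨p, hp⟩ := exists_walk_support_eq_of_isChain (l := l) (by simpa using h.2)
    exact ⟨.cons h.1 p, by simp [hp]⟩

theorem exists_isCycle_of_isChain {u : V} {l : List V}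
    (hchain : (u :: l ++ [u]).IsChain G.Adj) (hnd : (u :: l).Nodup) (hl : 2 ≤ l.length) :
    ∃ w : G.Walk u u, w.IsCycle ∧ w.length = l.length + 1 := by
  obtain ⟨b, l, rfl⟩ : ∃ b l', l = b :: l' := List.exists_cons_of_length_pos (by omega)
  rw [List.cons_append, List.cons_append, List.isChain_cons_cons] at hchain
  obtain ⟨p, hp⟩ := exists_walk_support_eq_of_isChain (u := u) (l := l) (by simpa using hchain.2)
  have hpath : p.IsPath := .mk' <| by
    rw [hp]
    exact (List.perm_append_singleton u _).nodup_iff.2 hnd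
  have hlen : p.length = l.length + 1 := by simpa [hp] using p.length_support.symm
  refine ⟨.cons hchain.1 p, ?_, by simp [hlen]⟩
  rw [Walk.isCycle_iff_isPath_tail_and_le_length, Walk.tail_cons]
  rw [List.length_cons] at hl
  exact ⟨by simpa using hpath, by rw [Walk.length_cons, hlen]; omega⟩

end Chains

section CyclicFrom

variable {α : Type*} [DecidableEq α] {l : List α} {v y : α}

/-- `l` read cyclically, starting from `v`. -/
def cyclicFrom (l : List α) (v : α) (i : ℕ) : α := l.getD ((l.idxOf v + i) % l.length) v

theorem cyclicFrom_eq_getElem (hl : l ≠ []) (i : ℕ) :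
    cyclicFrom l v i = l[(l.idxOf v + i) % l.length]'(Nat.mod_lt _ (List.length_pos_iff.2 hl)) :=
  List.getD_eq_getElem ..

theorem cyclicFrom_mem (hl : l ≠ []) (i : ℕ) : cyclicFrom l v i ∈ l := by
  rw [cyclicFrom_eq_getElem hl]; exact List.getElem_mem _

theorem cyclicFrom_zero (hv : v ∈ l) : cyclicFrom l v 0 = v := by
  rw [cyclicFrom_eq_getElem (List.ne_nil_of_mem hv), Nat.add_zero]
  simp [Nat.mod_eq_of_lt (List.idxOf_lt_length_iff.2 hv)]

theorem periodic_cyclicFrom : Function.Periodic (cyclicFrom l v) l.length := by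
  intro i; simp [cyclicFrom, ← Nat.add_assoc]

theorem cyclicFrom_eq_cyclicFrom_iff (hl : l.Nodup) (hne : l ≠ []) {i j : ℕ} :
    cyclicFrom l v i = cyclicFrom l v j ↔ i % l.length = j % l.length := by
  rw [cyclicFrom_eq_getElem hne, cyclicFrom_eq_getElem hne, hl.getElem_inj_iff]
  exact ⟨Nat.ModEq.add_left_cancel' _, Nat.ModEq.add_left _⟩

theorem next_cyclicFrom (hl : l.Nodup) (hne : l ≠ []) (i : ℕ) :
    l.next (cyclicFrom l v i) (cyclicFrom_mem hne i) = cyclicFrom l v (i + 1) := by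
  simp only [cyclicFrom_eq_getElem hne]
  rw [List.next_getElem _ hl]
  simp [Nat.add_assoc]

theorem exists_cyclicFrom_eq (hv : v ∈ l) (hy : y ∈ l) :
    ∃ i < l.length, cyclicFrom l v i = y := by
  have hv' := List.idxOf_lt_length_iff.2 hv
  have hy' := List.idxOf_lt_length_iff.2 hy
  refine ⟨(l.idxOf y + l.length - l.idxOf v) % l.length, Nat.mod_lt _ (by omega), ?_⟩
  rw [cyclicFrom, Nat.add_mod_mod,
    show l.idxOf v + (l.idxOf y + l.length - l.idxOf v) = l.idxOf y + l.length by omega,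
    Nat.add_mod_right, Nat.mod_eq_of_lt hy', List.getD_eq_getElem _ _ hy', List.getElem_idxOf]

end CyclicFrom

section Routes

variable {G : SimpleGraph V}

def seg (s e : ℕ) : List ℕ :=
  if s < e then s :: seg (s + 1) e else if e < s then s :: seg (s - 1) e else [e]
termination_by s - e + (e - s)

theorem mem_seg {s e i : ℕ} : i ∈ seg s e ↔ min s e ≤ i ∧ i ≤ max s e := by
  fun_induction seg s e <;> simp only [List.mem_cons, List.not_mem_nil, or_false, *] <;> omega

theorem length_seg (s e : ℕ) : (seg s e).length = s - e + (e - s) + 1 := by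
  fun_induction seg s e <;> simp only [List.length_cons, List.length_nil, *] <;> omega

theorem isChain_cons_map_seg_append {g : ℕ → V} (hg : ∀ i, G.Adj (g i) (g (i + 1)))
    {x : V} {s e : ℕ} {l : List V} (hx : G.Adj x (g s)) (hl : (g e :: l).IsChain G.Adj) :
    (x :: ((seg s e).map g ++ l)).IsChain G.Adj := by
  fun_induction seg s e generalizing x with
  | case1 s _ ih => exact List.isChain_cons_cons.2 ⟨hx, ih (hg s)⟩
  | case2 s _ _ ih =>
    refine List.isChain_cons_cons.2 ⟨hx, ih ?_⟩
    simpa [Nat.sub_add_cancel (by omega : 1 ≤ s)] using (hg (s - 1)).symm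
  | case3 s _ _ =>
    obtain rfl : s = e := by omega
    exact List.isChain_cons_cons.2 ⟨hx, hl⟩

def routeIdx (R : List (ℕ × ℕ)) : List ℕ := R.flatMap fun se => seg se.1 se.2

theorem routeIdx_nil : routeIdx [] = [] := rfl

theorem mem_routeIdx_cons {s e i : ℕ} {R : List (ℕ × ℕ)} :
    i ∈ routeIdx ((s, e) :: R) ↔ (min s e ≤ i ∧ i ≤ max s e) ∨ i ∈ routeIdx R := by
  simp [routeIdx, mem_seg]

theorem length_routeIdx_cons (s e : ℕ) (R : List (ℕ × ℕ)) :
    (routeIdx ((s, e) :: R)).length = s - e + (e - s) + 1 + (routeIdx R).length := by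
  simp [routeIdx, length_seg]

/-- `RouteAdj G g x R y`: the route `x, g s₁ … g e₁, g s₂ … g e₂, …, y` uses an edge of `G` at
each of its jumps. -/
def RouteAdj (G : SimpleGraph V) (g : ℕ → V) : V → List (ℕ × ℕ) → V → Prop
  | x, [], y => G.Adj x y
  | x, (s, e) :: R, y => G.Adj x (g s) ∧ RouteAdj G g (g e) R y

theorem isChain_route {g : ℕ → V} (hg : ∀ i, G.Adj (g i) (g (i + 1))) {y : V} :
    ∀ {x : V} (R : List (ℕ × ℕ)), RouteAdj G g x R y →
      (x :: (routeIdx R).map g ++ [y]).IsChain G.Adj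
  | x, [], h => List.isChain_pair.2 h
  | x, (s, e) :: R, h => by
    simpa [routeIdx] using isChain_cons_map_seg_append hg h.1 (isChain_route hg R h.2)

end Routes

structure IsCycleEnum (G : SimpleGraph V) (g : ℕ → V) (L : ℕ) : Prop where
  adj : ∀ i, G.Adj (g i) (g (i + 1))
  periodic : Function.Periodic g L
  injOn : Set.InjOn g (Set.Iio L)
  three_le : 3 ≤ L

theorem IsCycleEnum.adj_sub_one_zero {G : SimpleGraph V} {g : ℕ → V} {L : ℕ}
    (hg : IsCycleEnum G g L) : G.Adj (g (L - 1)) (g 0) := by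
  simpa [Nat.sub_add_cancel (by linarith [hg.three_le] : 1 ≤ L), hg.periodic.eq] using
    hg.adj (L - 1)

theorem IsCycleEnum.apply_eq_apply_iff {G : SimpleGraph V} {g : ℕ → V} {L : ℕ}
    (hg : IsCycleEnum G g L) {i j : ℕ} : g i = g j ↔ i % L = j % L := by
  have hL : 0 < L := by linarith [hg.three_le]
  rw [← hg.periodic.map_mod_nat i, ← hg.periodic.map_mod_nat j]
  exact hg.injOn.eq_iff (Nat.mod_lt _ hL) (Nat.mod_lt _ hL)

section OrientedCycle

variable {G : SimpleGraph V} {a : V} {c : G.Walk a a}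

theorem length_tail_support (c : G.Walk a a) : c.support.tail.length = c.length := by
  simp

variable [DecidableEq V]

theorem adj_next_tail_support (hc : c.IsCycle) {y : V} (hy : y ∈ c.support.tail) :
    G.Adj y (c.support.tail.next y hy) := by
  have hL := hc.three_le_length
  have hget (k : ℕ) (hk : k < c.support.tail.length) : c.support.tail[k] = c.getVert (k + 1) := by
    rw [List.getElem_tail, c.getVert_eq_support_getElem (by rw [length_tail_support] at hk; omega)]
  obtain ⟨j, hj, rfl⟩ := List.getElem_of_mem hy
  rw [List.next_getElem _ hc.support_nodup, hget, hget, length_tail_support]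
  rw [length_tail_support] at hj
  rcases Nat.lt_or_ge (j + 1) c.length with h | h
  · rw [Nat.mod_eq_of_lt h]; exact c.adj_getVert_succ h
  · rw [show j + 1 = c.length by omega, Nat.mod_self, c.getVert_length]
    simpa using c.adj_getVert_succ (i := 0) (by omega)

structure EnumeratesCycle (c : G.Walk a a) (g : ℕ → V) : Prop extends IsCycleEnum G g c.length where
  cSucc_eq : ∀ i, cSucc c (g i) = g (i + 1)
  cPred_eq : ∀ i, cPred c (g (i + 1)) = g i
  mem_support : ∀ i, g i ∈ c.support
  exists_eq : ∀ y ∈ c.support, ∃ i < c.length, g i = y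

theorem exists_enumeratesCycle (hc : c.IsCycle) {v : V}
    (hv : v ∈ c.support) : ∃ g, EnumeratesCycle c g ∧ g 0 = v := by
  have hne : c.support.tail ≠ [] := List.ne_nil_of_mem (Walk.end_mem_tail_support hc.not_nil)
  have hnd : c.support.tail.Nodup := hc.support_nodup
  have hsupp : ∀ {y}, y ∈ c.support ↔ y ∈ c.support.tail := by
    intro y
    rw [← c.cons_tail_support, List.mem_cons]
    exact ⟨fun h => h.elim (· ▸ Walk.end_mem_tail_support hc.not_nil) id, Or.inr⟩
  have hnext (i : ℕ) : c.support.tail.next _ (cyclicFrom_mem (v := v) hne i) =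
      cyclicFrom c.support.tail v (i + 1) := next_cyclicFrom hnd hne i
  refine ⟨cyclicFrom c.support.tail v, ⟨⟨fun i => ?_, ?_, fun i hi j hj hij => ?_,
    hc.three_le_length⟩, fun i => ?_, fun i => ?_, fun i => hsupp.2 (cyclicFrom_mem hne i),
    fun y hy => ?_⟩, cyclicFrom_zero (hsupp.1 hv)⟩
  · exact hnext i ▸ adj_next_tail_support hc _
  · simpa only [length_tail_support] using periodic_cyclicFrom (l := c.support.tail) (v := v)
  · rw [cyclicFrom_eq_cyclicFrom_iff hnd hne, length_tail_support,
      Nat.mod_eq_of_lt hi, Nat.mod_eq_of_lt hj] at hij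
    exact hij
  · rw [cSucc, dif_pos (cyclicFrom_mem hne i), hnext]
  · rw [cPred, dif_pos (cyclicFrom_mem hne (i + 1))]
    simpa only [hnext] using List.prev_next _ hnd _ (cyclicFrom_mem (v := v) hne i)
  · simpa [length_tail_support] using exists_cyclicFrom_eq (hsupp.1 hv) (hsupp.1 hy)

theorem mem_support_of_mem_arc {x y z : V} (hz : z ∈ c.support) (hy : y ∈ arc c x z) :
    x ∈ c.support := by
  by_contra hx
  obtain ⟨-, k, -, -, -, hk, -⟩ := hy
  have hfix : cSucc c x = x := dif_neg fun h => hx (List.mem_of_mem_tail h)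
  rw [Function.iterate_fixed hfix] at hk
  exact hx (hk ▸ hz)

namespace EnumeratesCycle

variable {g : ℕ → V}

theorem iterate_cSucc (hg : EnumeratesCycle c g) (i k : ℕ) : (cSucc c)^[k] (g i) = g (i + k) := by
  induction k with
  | zero => rfl
  | succ k ih => rw [Function.iterate_succ_apply', ih, hg.cSucc_eq, Nat.add_assoc]

theorem cPred_zero (hg : EnumeratesCycle c g) : cPred c (g 0) = g (c.length - 1) := by
  have := hg.cPred_eq (c.length - 1)
  rwa [Nat.sub_add_cancel (by linarith [hg.three_le]), hg.periodic.eq] at this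

theorem cPred_eq_sub_one (hg : EnumeratesCycle c g) {i : ℕ} (hi : 1 ≤ i) :
    cPred c (g i) = g (i - 1) := by
  have := hg.cPred_eq (i - 1)
  rwa [Nat.sub_add_cancel hi] at this

/-- The conclusion `s < p + L` records that `arc c x x` is empty. -/
theorem exists_eq_of_mem_arc (hg : EnumeratesCycle c g) {p s : ℕ} {y z : V}
    (hy : y ∈ arc c (g p) z) (hz : g s = z) (hps : p ≤ s) (hs : s ≤ p + c.length) :
    ∃ t, p < t ∧ t < s ∧ s < p + c.length ∧ y = g t := by
  obtain ⟨i, k, hi, hik, hkL, hk, rfl⟩ := hy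
  rw [hg.iterate_cSucc, ← hz] at hk
  obtain rfl : p + k = s := by
    obtain ⟨d, rfl⟩ := Nat.exists_eq_add_of_le hps
    have hmod : k % c.length = d % c.length :=
      Nat.ModEq.add_left_cancel' p (hg.apply_eq_apply_iff.1 hk)
    rw [Nat.mod_eq_of_lt hkL] at hmod
    rcases (show d < c.length ∨ d = c.length by omega) with hd | rfl
    · rw [Nat.mod_eq_of_lt hd] at hmod; omega
    · rw [Nat.mod_self] at hmod; omega
  exact ⟨p + i, by omega, by omega, by omega, hg.iterate_cSucc p i⟩

end EnumeratesCycle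

end OrientedCycle

/-- The standard setup in indices: `g` runs around a longest cycle `C` (of length `L`) starting
at `v = g 0`, and `u ∉ C` is adjacent to `v⁺ = g 1` and `v⁻ = g (L - 1)`. -/
structure StandardSetup (G : SimpleGraph V) (L : ℕ) (g : ℕ → V) (u : V) : Prop where
  longest : ∀ ⦃b : V⦄ (w : G.Walk b b), w.IsCycle → w.length ≤ L
  enum : IsCycleEnum G g L
  ne : ∀ i, g i ≠ u
  adj_one : G.Adj u (g 1)
  adj_sub_one : G.Adj u (g (L - 1))

namespace StandardSetup

variable {G : SimpleGraph V} {L : ℕ} {g : ℕ → V} {u : V}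

/-- The side conditions say that the route visits every index below `L` exactly once; for an
explicit route they are linear arithmetic. -/
theorem false_of_route (S : StandardSetup G L g u) (R : List (ℕ × ℕ))
    (hR : RouteAdj G g u R u)
    (hcover : ∀ i < L, i ∈ routeIdx R := by
      intro i hi; simp only [mem_routeIdx_cons, routeIdx_nil, List.not_mem_nil, or_false]; omega)
    (hlen : (routeIdx R).length = L := by
      simp only [length_routeIdx_cons, routeIdx_nil, List.length_nil]; omega) : False := by
  have hperm : (routeIdx R).Perm (List.range L) :=
    (List.nodup_range.subperm fun i hi => hcover i (List.mem_range.1 hi)).perm_of_length_le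
      (by simp [hlen]) |>.symm
  have hnd : (u :: (routeIdx R).map g).Nodup := by
    refine List.nodup_cons.2 ⟨by simpa using fun i _ => S.ne i, ?_⟩
    refine (hperm.nodup_iff.2 List.nodup_range).map_on fun i hi j hj hij => ?_
    exact S.enum.injOn (List.mem_range.1 (hperm.subset hi)) (List.mem_range.1 (hperm.subset hj)) hij
  obtain ⟨w, hw, hwlen⟩ := exists_isCycle_of_isChain (isChain_route S.enum.adj R hR) hnd
    (by rw [List.length_map, hlen]; linarith [S.enum.three_le])
  have := S.longest w hw
  rw [List.length_map, hlen] at hwlen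
  omega

theorem false_of_consecutive (S : StandardSetup G L g u) {p : ℕ} (hp : 1 ≤ p) (hpL : p + 2 ≤ L)
    (hbi : g p ∈ G.neighborSet u ∪ G.neighborSet (g 0))
    (hbj : g (p + 1) ∈ G.neighborSet u ∪ G.neighborSet (g 0)) : False := by
  have hw := S.enum.adj_sub_one_zero
  have h₀ := S.enum.adj 0
  rcases hbi with hbi | hbi <;> rcases hbj with hbj | hbj
  · exact S.false_of_route [(p + 1, L - 1), (0, 0), (1, p)] ⟨hbj, hw, h₀, hbi.symm⟩
  · exact S.false_of_route [(p, 1), (0, 0), (p + 1, L - 1)]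
      ⟨hbi, h₀.symm, hbj, S.adj_sub_one.symm⟩
  · exact S.false_of_route [(p + 1, L - 1), (0, 0), (p, 1)] ⟨hbj, hw, hbi, S.adj_one.symm⟩
  · exact S.false_of_route [(1, p), (0, 0), (p + 1, L - 1)]
      ⟨S.adj_one, hbi.symm, hbj, S.adj_sub_one.symm⟩

end StandardSetup

/-- The configuration of the theorem in indices: `bᵢ = g p`, `bⱼ = g r`, the chord joins
`a = g (p + 1)` and `c = g (r - 1)`, and `x = g q ∈ N(u) ∩ N(v)` lies strictly between them. -/
structure ChordSetup (G : SimpleGraph V) (L : ℕ) (g : ℕ → V) (u : V) (p q r : ℕ) : Prop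
    extends StandardSetup G L g u where
  one_le_p : 1 ≤ p
  p_add_two_le_q : p + 2 ≤ q
  q_add_two_le_r : q + 2 ≤ r
  r_lt : r < L
  mem_bi : g p ∈ G.neighborSet u ∪ G.neighborSet (g 0)
  mem_bj : g r ∈ G.neighborSet u ∪ G.neighborSet (g 0)
  chord : G.Adj (g (p + 1)) (g (r - 1))
  adj_u : G.Adj u (g q)
  adj_v : G.Adj (g 0) (g q)

namespace ChordSetup

variable {G : SimpleGraph V} {L : ℕ} {g : ℕ → V} {u : V} {p q r : ℕ}

theorem not_adj_succ_one (S : ChordSetup G L g u p q r) : ¬ G.Adj (g (q + 1)) (g 1) := by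
  intro h
  obtain ⟨S₀, hp, hq, hr, hrL, hbi, hbj, hac, hxu, hxv⟩ := S
  have hw := S₀.enum.adj_sub_one_zero
  rcases hbi with hbi | hbi <;> rcases hbj with hbj | hbj
  · exact S₀.false_of_route [(p, 1), (q + 1, r - 1), (p + 1, q), (0, 0), (L - 1, r)]
      ⟨hbi, h.symm, hac.symm, hxv.symm, hw.symm, hbj.symm⟩
  · exact S₀.false_of_route [(p, 1), (q + 1, r - 1), (p + 1, q), (0, 0), (r, L - 1)]
      ⟨hbi, h.symm, hac.symm, hxv.symm, hbj, S₀.adj_sub_one.symm⟩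
  · exact S₀.false_of_route [(q, p + 1), (r - 1, q + 1), (1, p), (0, 0), (L - 1, r)]
      ⟨hxu, hac, h, hbi.symm, hw.symm, hbj.symm⟩
  · exact S₀.false_of_route [(L - 1, r), (0, 0), (p, 1), (q + 1, r - 1), (p + 1, q)]
      ⟨S₀.adj_sub_one, hbj.symm, hbi, h.symm, hac.symm, hxu.symm⟩

theorem not_adj_succ_sub_one (S : ChordSetup G L g u p q r) :
    ¬ G.Adj (g (q + 1)) (g (L - 1)) := by
  intro h
  obtain ⟨S₀, hp, hq, hr, hrL, hbi, hbj, hac, hxu, hxv⟩ := S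
  have h₀ := S₀.enum.adj 0
  rcases hbi with hbi | hbi <;> rcases hbj with hbj | hbj
  · exact S₀.false_of_route [(r, L - 1), (q + 1, r - 1), (p + 1, q), (0, 0), (1, p)]
      ⟨hbj, h.symm, hac.symm, hxv.symm, h₀, hbi.symm⟩
  · exact S₀.false_of_route [(q, p + 1), (r - 1, q + 1), (L - 1, r), (0, 0), (1, p)]
      ⟨hxu, hac, h, hbj.symm, h₀, hbi.symm⟩
  · exact S₀.false_of_route [(r, L - 1), (q + 1, r - 1), (p + 1, q), (0, 0), (p, 1)]
      ⟨hbj, h.symm, hac.symm, hxv.symm, hbi, S₀.adj_one.symm⟩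
  · exact S₀.false_of_route [(q, p + 1), (r - 1, q + 1), (L - 1, r), (0, 0), (p, 1)]
      ⟨hxu, hac, h, hbj.symm, hbi, S₀.adj_one.symm⟩

theorem not_adj_sub_one_one (S : ChordSetup G L g u p q r) : ¬ G.Adj (g (q - 1)) (g 1) := by
  intro h
  obtain ⟨S₀, hp, hq, hr, hrL, hbi, hbj, hac, hxu, hxv⟩ := S
  have hw := S₀.enum.adj_sub_one_zero
  rcases hbi with hbi | hbi <;> rcases hbj with hbj | hbj
  · exact S₀.false_of_route [(p, 1), (q - 1, p + 1), (r - 1, q), (0, 0), (L - 1, r)]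
      ⟨hbi, h.symm, hac, hxv.symm, hw.symm, hbj.symm⟩
  · exact S₀.false_of_route [(p, 1), (q - 1, p + 1), (r - 1, q), (0, 0), (r, L - 1)]
      ⟨hbi, h.symm, hac, hxv.symm, hbj, S₀.adj_sub_one.symm⟩
  · exact S₀.false_of_route [(r, L - 1), (0, 0), (p, 1), (q - 1, p + 1), (r - 1, q)]
      ⟨hbj, hw, hbi, h.symm, hac, hxu.symm⟩
  · exact S₀.false_of_route [(q, r - 1), (p + 1, q - 1), (1, p), (0, 0), (r, L - 1)]
      ⟨hxu, hac.symm, h, hbi.symm, hbj, S₀.adj_sub_one.symm⟩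

theorem not_adj_sub_one_sub_one (S : ChordSetup G L g u p q r) :
    ¬ G.Adj (g (q - 1)) (g (L - 1)) := by
  intro h
  obtain ⟨S₀, hp, hq, hr, hrL, hbi, hbj, hac, hxu, hxv⟩ := S
  have h₀ := S₀.enum.adj 0
  rcases hbi with hbi | hbi <;> rcases hbj with hbj | hbj
  · exact S₀.false_of_route [(r, L - 1), (q - 1, p + 1), (r - 1, q), (0, 0), (1, p)]
      ⟨hbj, h.symm, hac, hxv.symm, h₀, hbi.symm⟩
  · exact S₀.false_of_route [(q, r - 1), (p + 1, q - 1), (L - 1, r), (0, 0), (1, p)]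
      ⟨hxu, hac.symm, h, hbj.symm, h₀, hbi.symm⟩
  · exact S₀.false_of_route [(r, L - 1), (q - 1, p + 1), (r - 1, q), (0, 0), (p, 1)]
      ⟨hbj, h.symm, hac, hxv.symm, hbi, S₀.adj_one.symm⟩
  · exact S₀.false_of_route [(1, p), (0, 0), (r, L - 1), (q - 1, p + 1), (r - 1, q)]
      ⟨S₀.adj_one, hbi.symm, hbj, h.symm, hac, hxu.symm⟩

end ChordSetup

theorem stmt16_general {V : Type*} [DecidableEq V] (G : SimpleGraph V)
    {a : V} (c : G.Walk a a) (hc : IsLongestCycle G c)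
    (u v : V) (hu : u ∉ c.support) (hv : v ∈ c.support)
    (huv1 : G.Adj u (cSucc c v)) (huv2 : G.Adj u (cPred c v))
    (B : Set V) (hB : B = G.neighborSet u ∪ G.neighborSet v)
    (bi bj a' c' : V) (hbi : bi ∈ B) (hbj : bj ∈ B) (horder : bj ∈ arc c bi v)
    (ha' : a' = cSucc c bi) (hc' : c' = cPred c bj) (hac : a' ≠ c') (hadj : G.Adj a' c')
    (x : V) (hxu : x ∈ G.neighborSet u) (hxv : x ∈ G.neighborSet v)
    (hx : x ∈ arc c a' c') :
    ¬ G.Adj (cSucc c x) (cSucc c v) ∧ ¬ G.Adj (cSucc c x) (cPred c v) ∧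
    ¬ G.Adj (cPred c x) (cSucc c v) ∧ ¬ G.Adj (cPred c x) (cPred c v) := by
  obtain ⟨g, hg, rfl⟩ := exists_enumeratesCycle hc.1 hv
  obtain ⟨p, hp, rfl⟩ := hg.exists_eq bi (mem_support_of_mem_arc hv horder)
  obtain ⟨r, hpr, hrL, hpL, rfl⟩ :=
    hg.exists_eq_of_mem_arc horder hg.periodic.eq hp.le (Nat.le_add_left _ _)
  subst hB ha' hc'
  rw [hg.cSucc_eq, hg.cPred_eq_sub_one (by omega)] at hadj hac hx
  rw [hg.cSucc_eq] at huv1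
  rw [hg.cPred_zero] at huv2
  have S : StandardSetup G c.length g u :=
    ⟨hc.2, hg.toIsCycleEnum, fun i h => hu (h ▸ hg.mem_support i), huv1, huv2⟩
  obtain rfl | hr : r = p + 1 ∨ p + 3 ≤ r := by
    have : r ≠ p + 2 := by rintro rfl; exact hac rfl
    omega
  · exact (S.false_of_consecutive (by omega) (by omega) hbi hbj).elim
  obtain ⟨q, hpq, hqr, -, rfl⟩ := hg.exists_eq_of_mem_arc hx rfl (by omega) (by omega)
  have C : ChordSetup G c.length g u p q r :=
    ⟨S, by omega, by omega, by omega, hrL, hbi, hbj, hadj, hxu, hxv⟩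
  rw [hg.cSucc_eq, hg.cSucc_eq, hg.cPred_zero, hg.cPred_eq_sub_one (by omega : 1 ≤ q)]
  exact ⟨C.not_adj_succ_one, C.not_adj_succ_sub_one, C.not_adj_sub_one_one,
    C.not_adj_sub_one_sub_one⟩

theorem stmt16 {V : Type*} [Fintype V] [DecidableEq V] (G : SimpleGraph V)
    (hn : 3 ≤ Fintype.card V) (htough : OneTough G) (hsig : Fintype.card V ≤ sigma3 G)
    (hham : ¬ G.IsHamiltonian) {a : V} (c : G.Walk a a) (hc : IsLongestCycle G c)
    (u v : V) (hu : u ∉ c.support) (hv : v ∈ c.support)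
    (huv1 : G.Adj u (cSucc c v)) (huv2 : G.Adj u (cPred c v))
    (B : Set V) (hB : B = G.neighborSet u ∪ G.neighborSet v)
    (bi bj a' c' : V) (hbi : bi ∈ B) (hbj : bj ∈ B) (horder : bj ∈ arc c bi v)
    (ha' : a' = cSucc c bi) (hc' : c' = cPred c bj) (hac : a' ≠ c') (hadj : G.Adj a' c')
    (x : V) (hxu : x ∈ G.neighborSet u) (hxv : x ∈ G.neighborSet v)
    (hx : x ∈ arc c a' c') :
    ¬ G.Adj (cSucc c x) (cSucc c v) ∧ ¬ G.Adj (cSucc c x) (cPred c v) ∧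
    ¬ G.Adj (cPred c x) (cSucc c v) ∧ ¬ G.Adj (cPred c x) (cPred c v) :=
  stmt16_general G c hc u v hu hv huv1 huv2 B hB bi bj a' c' hbi hbj horder ha' hc' hac hadj x hxu
    hxv hx

end
end Paper
end
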